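/- arXiv:1907.09247 — 3 statements merged into one kernel-verified Lean document; each statement's English description precedes it below -/
import Mathlib

section
/- For any theory Γ and any total belief view W, W is a weak autoepistemic world view of Γ if and only if W is a G91-world view of Γ. -/
namespace Epist

attribute [local instance] Classical.propDecidable

/-- Epistemic formulas over a set (type) of atoms `α`. -/
inductive EForm (α : Type) : Type where
  | bot : EForm α
  | atom : α → EForm α
  | and : EForm α → EForm α → EForm α
  | or : EForm α → EForm α → EForm α
  | imp : EForm α → EForm α → EForm α
  | K : EForm α → EForm α

variable {α : Type}

/-- ¬φ abbreviates φ → ⊥. -/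
def EForm.neg (φ : EForm α) : EForm α := .imp φ .bot

/-- ⊤ abbreviates ¬⊥. -/
def EForm.top : EForm α := EForm.neg .bot

/-- Atoms occurring in a formula. -/
def EForm.atoms : EForm α → Set α
  | .bot => ∅
  | .atom a => {a}
  | .and φ ψ => φ.atoms ∪ ψ.atoms
  | .or φ ψ => φ.atoms ∪ ψ.atoms
  | .imp φ ψ => φ.atoms ∪ ψ.atoms
  | .K φ => φ.atoms

/-- A belief view: a set of HT-interpretations ⟨H,T⟩ (as pairs of sets of atoms). -/
abbrev BView (α : Type) := Set (Set α × Set α)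

/-- W^t : the total belief view {⟨T,T⟩ : ⟨H,T⟩ ∈ W}. -/
def tview (W : BView α) : BView α := (fun i => (i.2, i.2)) '' W

/-- Wellformedness of a belief view: nonempty and H ⊆ T for all members. -/
def isBView (W : BView α) : Prop := W.Nonempty ∧ ∀ i ∈ W, i.1 ⊆ i.2

/-- A belief view is total when all its HT-interpretations are total. -/
def totalView (W : BView α) : Prop := ∀ i ∈ W, i.1 = i.2

/-- Satisfaction of an epistemic formula by a belief interpretation ⟨W,H,T⟩. -/
def sat : EForm α → BView α → Set α → Set α → Prop
  | .bot, _, _, _ => False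
  | .atom a, _, H, _ => a ∈ H
  | .and φ ψ, W, H, T => sat φ W H T ∧ sat ψ W H T
  | .or φ ψ, W, H, T => sat φ W H T ∨ sat ψ W H T
  | .imp φ ψ, W, H, T =>
      (sat φ W H T → sat ψ W H T) ∧ (sat φ (tview W) T T → sat ψ (tview W) T T)
  | .K φ, W, _, _ => ∀ i ∈ W, sat φ W i.1 i.2

/-- ⟨W,H',T'⟩ ⊨ φ for all ⟨H',T'⟩ ∈ W. -/
def epSat (W : BView α) (φ : EForm α) : Prop := ∀ i ∈ W, sat φ W i.1 i.2

/-- W is an epistemic model of the theory Γ. -/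
def epModel (W : BView α) (Γ : Set (EForm α)) : Prop :=
  isBView W ∧ ∀ φ ∈ Γ, epSat W φ

/-- ⟨W,H,T⟩ is a belief model of the theory Γ. -/
def beliefModel (W : BView α) (H T : Set α) (Γ : Set (EForm α)) : Prop :=
  isBView W ∧ H ⊆ T ∧ (∀ φ ∈ Γ, sat φ W H T) ∧ ∀ φ ∈ Γ, epSat W φ

/-- Order ⪯ on belief interpretations: ⟨W',H',T'⟩ ⪯ ⟨W,H,T⟩. -/
def biLE (W' : BView α) (H' T' : Set α) (W : BView α) (H T : Set α) : Prop :=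
  (T' = T ∧ H' ⊆ H) ∧
  (∀ i ∈ W, ∃ H₁, (H₁, i.2) ∈ W' ∧ H₁ ⊆ i.1) ∧
  (∀ i ∈ W', ∃ H₁, (H₁, i.2) ∈ W ∧ i.1 ⊆ H₁)

/-- Strict order ≺ on belief interpretations. -/
def biLT (W' : BView α) (H' T' : Set α) (W : BView α) (H T : Set α) : Prop :=
  biLE W' H' T' W H T ∧ (W', H', T') ≠ (W, H, T)

/-- Order ⪯ on belief views. -/
def viewLE (W₁ W₂ : BView α) : Prop :=
  (∀ i ∈ W₂, ∃ H₁, (H₁, i.2) ∈ W₁ ∧ H₁ ⊆ i.1) ∧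
  (∀ i ∈ W₁, ∃ H₂, (H₂, i.2) ∈ W₂ ∧ i.1 ⊆ H₂)

/-- Strict order ≺ on belief views. -/
def viewLT (W₁ W₂ : BView α) : Prop := viewLE W₁ W₂ ∧ W₁ ≠ W₂

/-- ⟨W,T⟩ is an equilibrium belief model of Γ. -/
def eqBeliefModel (Γ : Set (EForm α)) (W : BView α) (T : Set α) : Prop :=
  totalView W ∧ beliefModel W T T Γ ∧
  ∀ W' H' T', beliefModel W' H' T' Γ → ¬ biLT W' H' T' W T T

/-- ⟨W,T⟩ is a weak equilibrium belief model of Γ: no belief-total (i.e. with total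
view) belief model of Γ is ≺-smaller. -/
def weakEqBeliefModel (Γ : Set (EForm α)) (W : BView α) (T : Set α) : Prop :=
  totalView W ∧ beliefModel W T T Γ ∧
  ∀ W' H' T', totalView W' → beliefModel W' H' T' Γ → ¬ biLT W' H' T' W T T

/-- Identification of a set of propositional interpretations with a total belief view. -/
def ofSets (S : Set (Set α)) : BView α := (fun T => (T, T)) '' S

/-- W is a FAEEL-world view of Γ iff W = { T : ⟨W,T⟩ is an equilibrium belief model }. -/
def FAEEL (Γ : Set (EForm α)) (W : BView α) : Prop :=
  isBView W ∧ totalView W ∧ W = ofSets {T | eqBeliefModel Γ W T}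

/-- W is a weak autoepistemic world view of Γ. -/
def weakAEWorldView (Γ : Set (EForm α)) (W : BView α) : Prop :=
  isBView W ∧ totalView W ∧ W = ofSets {T | weakEqBeliefModel Γ W T}

/-- W is a FEEL-world view of Γ. -/
def FEEL (Γ : Set (EForm α)) (W : BView α) : Prop :=
  totalView W ∧ epModel W Γ ∧ ∀ W', epModel W' Γ → ¬ viewLT W' W

/-- A belief view is simple iff ⟨H,T⟩,⟨H',T⟩ ∈ W imply H = H'. -/
def simpleView (W : BView α) : Prop := ∀ i ∈ W, ∀ j ∈ W, i.2 = j.2 → i.1 = j.1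

/-- W is an EEL-world view of Γ. -/
def EEL (Γ : Set (EForm α)) (W : BView α) : Prop :=
  totalView W ∧ epModel W Γ ∧
  ¬ ∃ W', simpleView W' ∧ epModel W' Γ ∧ tview W' = W ∧ ∃ i ∈ W', i.1 ⊂ i.2

/-- Ordinary here-and-there satisfaction (for objective, i.e. K-free, formulas). -/
def htSat (φ : EForm α) (H T : Set α) : Prop := sat φ (∅ : BView α) H T

/-- T is a stable model of the (objective) theory Δ. -/
def stableModel (Δ : Set (EForm α)) (T : Set α) : Prop :=
  (∀ φ ∈ Δ, htSat φ T T) ∧ ∀ H, H ⊂ T → ¬ ∀ φ ∈ Δ, htSat φ H T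

/-- SM[Δ] : the set of stable models of Δ. -/
def SMset (Δ : Set (EForm α)) : Set (Set α) := {T | stableModel Δ T}

/-- Subjective reduct of a formula w.r.t. a belief view W and a signature U:
each maximal subformula Kφ with Atoms(φ) ⊆ U is replaced by ⊤ if W ⊨ Kφ
and by ⊥ otherwise. -/
noncomputable def reduct (W : BView α) (U : Set α) : EForm α → EForm α
  | .bot => .bot
  | .atom a => .atom a
  | .and φ ψ => .and (reduct W U φ) (reduct W U ψ)
  | .or φ ψ => .or (reduct W U φ) (reduct W U ψ)
  | .imp φ ψ => .imp (reduct W U φ) (reduct W U ψ)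
  | .K φ =>
      if φ.atoms ⊆ U then (if epSat W (.K φ) then EForm.top else .bot)
      else .K (reduct W U φ)

/-- W is a G91-world view of Γ iff W = SM[Γ^W]. -/
def G91 (Γ : Set (EForm α)) (W : BView α) : Prop :=
  isBView W ∧ totalView W ∧ W = ofSets (SMset (reduct W Set.univ '' Γ))

/-- Negatively subjective reduct: each maximal subformula ¬Kφ is replaced
by ⊤ if W ⊭ Kφ and by ⊥ otherwise. -/
noncomputable def negReduct (W : BView α) : EForm α → EForm α
  | .bot => .bot
  | .atom a => .atom a
  | .and φ ψ => .and (negReduct W φ) (negReduct W ψ)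
  | .or φ ψ => .or (negReduct W φ) (negReduct W ψ)
  | .imp (.K φ) .bot => if epSat W (.K φ) then .bot else EForm.top
  | .imp φ ψ => .imp (negReduct W φ) (negReduct W ψ)
  | .K φ => .K (negReduct W φ)

/-- Atom, ⊤ or ⊥. -/
def isAtomBase (φ : EForm α) : Prop := (∃ a, φ = .atom a) ∨ φ = EForm.top ∨ φ = .bot

/-- Objective literals: l, ¬l or ¬¬l for l an atom, ⊤ or ⊥. -/
def isObjLit (φ : EForm α) : Prop :=
  isAtomBase φ ∨ (∃ ψ, isAtomBase ψ ∧ φ = EForm.neg ψ) ∨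
    (∃ ψ, isAtomBase ψ ∧ φ = EForm.neg (EForm.neg ψ))

/-- Subjective literals: Kl, ¬Kl or ¬¬Kl for l an objective literal. -/
def isSubjLit (φ : EForm α) : Prop :=
  (∃ l, isObjLit l ∧ φ = .K l) ∨ (∃ l, isObjLit l ∧ φ = EForm.neg (.K l)) ∨
    (∃ l, isObjLit l ∧ φ = EForm.neg (EForm.neg (.K l)))

/-- Positive subjective literals: Kl. -/
def isPosSubjLit (φ : EForm α) : Prop := ∃ l, isObjLit l ∧ φ = .K l

/-- A rule: a head disjunction of atoms and a body list of literals. -/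
structure ERule (α : Type) where
  head : List α
  body : List (EForm α)

/-- Wellformedness of a rule: every body member is an (objective or subjective) literal. -/
def ERule.wf (r : ERule α) : Prop := ∀ φ ∈ r.body, isObjLit φ ∨ isSubjLit φ

/-- Disjunction of atoms (⊥ when empty). -/
def disjForm : List α → EForm α
  | [] => .bot
  | a :: l => .or (.atom a) (disjForm l)

/-- Conjunction of formulas (⊤ when empty). -/
def conjForm : List (EForm α) → EForm α
  | [] => EForm.top
  | φ :: l => .and φ (conjForm l)

/-- The formula Head(r) ← Body(r) corresponding to a rule. -/
def ERule.form (r : ERule α) : EForm α := .imp (conjForm r.body) (disjForm r.head)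

/-- Atoms of Head(r). -/
def ERule.headAtoms (r : ERule α) : Set α := {a | a ∈ r.head}

/-- Atoms of Body_obj(r). -/
def ERule.objBodyAtoms (r : ERule α) : Set α := {a | ∃ φ ∈ r.body, isObjLit φ ∧ a ∈ φ.atoms}

/-- Atoms of Body_sub(r). -/
def ERule.subjBodyAtoms (r : ERule α) : Set α := {a | ∃ φ ∈ r.body, isSubjLit φ ∧ a ∈ φ.atoms}

/-- Atoms of Body⁺_sub(r). -/
def ERule.posSubjBodyAtoms (r : ERule α) : Set α :=
  {a | ∃ φ ∈ r.body, isPosSubjLit φ ∧ a ∈ φ.atoms}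

/-- Atoms(r). -/
def ERule.atoms (r : ERule α) : Set α := r.headAtoms ∪ {a | ∃ φ ∈ r.body, a ∈ φ.atoms}

/-- A rule is objective if all its body literals are objective. -/
def ERule.objective (r : ERule α) : Prop := ∀ φ ∈ r.body, isObjLit φ

/-- A program is a set of rules. -/
abbrev EProgram (α : Type) := Set (ERule α)

def progWF (P : EProgram α) : Prop := ∀ r ∈ P, r.wf

/-- The theory consisting of the formulas of the rules of a program. -/
def progTheory (P : EProgram α) : Set (EForm α) := ERule.form '' P

def progAtoms (P : EProgram α) : Set α := {a | ∃ r ∈ P, a ∈ r.atoms}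

def progObjective (P : EProgram α) : Prop := ∀ r ∈ P, r.objective

/-- U is an epistemic splitting set of P. -/
def splittingSet (P : EProgram α) (U : Set α) : Prop :=
  ∀ r ∈ P, r.atoms ⊆ U ∨ (r.objBodyAtoms ∪ r.headAtoms) ∩ U = ∅

/-- ⟨B,Tp⟩ is a splitting of P w.r.t. U. -/
def isSplitting (P : EProgram α) (U : Set α) (B Tp : EProgram α) : Prop :=
  B ∩ Tp = ∅ ∧ B ∪ Tp = P ∧ (∀ r ∈ B, r.atoms ⊆ U) ∧
    ∀ r ∈ Tp, (r.objBodyAtoms ∪ r.headAtoms) ∩ U = ∅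

/-- Subjective reduct of a rule. -/
noncomputable def ruleReduct (W : BView α) (U : Set α) (r : ERule α) : ERule α :=
  ⟨r.head, r.body.map (reduct W U)⟩

/-- E_U(Π,W) := (T_U(Π))^W_U, here taking the top part Tp as argument. -/
noncomputable def EU (Tp : EProgram α) (W : BView α) (U : Set α) : EProgram α :=
  ruleReduct W U '' Tp

/-- W_b ⊔ W_t (for total belief views: pointwise unions). -/
def vjoin (W₁ W₂ : BView α) : BView α :=
  {i | ∃ j ∈ W₁, ∃ k ∈ W₂, i = (j.1 ∪ k.1, j.2 ∪ k.2)}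

/-- W|_U (for total belief views: pointwise intersection with U). -/
def vrestrict (W : BView α) (U : Set α) : BView α :=
  {i | ∃ j ∈ W, i = (j.1 ∩ U, j.2 ∩ U)}

/-- Epistemic dependence dep(a,b). -/
def dep (P : EProgram α) (a b : α) : Prop :=
  ∃ r ∈ P, a ∈ r.headAtoms ∪ r.objBodyAtoms ∧ b ∈ r.subjBodyAtoms

/-- Positive epistemic dependence dep⁺(a,b). -/
def depPos (P : EProgram α) (a b : α) : Prop :=
  ∃ r ∈ P, a ∈ r.headAtoms ∪ r.objBodyAtoms ∧ b ∈ r.posSubjBodyAtoms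

/-- P is epistemically stratified. -/
def stratified (P : EProgram α) : Prop :=
  ∃ lam : α → ℕ,
    (∀ r ∈ P, ∀ a ∈ r.atoms \ r.subjBodyAtoms, ∀ b ∈ r.atoms \ r.subjBodyAtoms,
      lam a = lam b) ∧
    ∀ a b, dep P a b → lam a > lam b

/-- P is epistemically tight. -/
def tight (P : EProgram α) : Prop :=
  ∃ lam : α → ℕ,
    (∀ r ∈ P, ∀ a ∈ r.atoms \ r.subjBodyAtoms, ∀ b ∈ r.atoms \ r.subjBodyAtoms,
      lam a = lam b) ∧
    ∀ a b, depPos P a b → lam a > lam b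

/-- A semantics S satisfies the epistemic splitting property. -/
def satisfiesSplitting (S : EProgram α → BView α → Prop) : Prop :=
  ∀ P : EProgram α, progWF P → ∀ U : Set α, splittingSet P U →
    ∀ B Tp : EProgram α, isSplitting P U B Tp →
      ∀ W : BView α,
        S P W ↔ ∃ Wb Wt, S B Wb ∧ S (EU Tp Wb U) Wt ∧ W = vjoin Wb Wt

/-- A semantics S satisfies supra-ASP. -/
def supraASP (S : EProgram α → BView α → Prop) : Prop :=
  ∀ P : EProgram α, progWF P → progObjective P →
    (SMset (progTheory P) ≠ ∅ ∧ ∀ W, (S P W ↔ W = ofSets (SMset (progTheory P)))) ∨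
    (SMset (progTheory P) = ∅ ∧ ∀ W, ¬ S P W)

end Epist

/-!
For a total view `W`, the subjective reduct `Γ^W` replaces every `Kφ` by the truth value it
already has under `W`, so `⟨W,H,T⟩ ⊨ φ` is HT-satisfaction of `φ^W` by `⟨H,T⟩`. A belief-total
interpretation `⟨W',H',T⟩ ⪯ ⟨W,T,T⟩` must have `W' = W`, because on total views the order
only compares the sets `T₁` occurring in them. Hence `⟨W,T⟩` is a weak equilibrium belief
model exactly when `T` is a stable model of `Γ^W`, provided `W ⊨ Γ`; and this epistemic
condition holds under either definition, since every member of `W` is a (stable) model.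
-/

namespace Epist

variable {α : Type}

lemma tview_eq_self_of_total {W : BView α} (hW : totalView W) : tview W = W := by
  ext ⟨H, T⟩
  constructor
  · rintro ⟨⟨H', T'⟩, hmem, heq⟩
    obtain ⟨rfl, rfl⟩ := Prod.mk.inj heq
    obtain rfl : H' = T' := hW _ hmem
    exact hmem
  · intro hmem
    obtain rfl : H = T := hW _ hmem
    exact ⟨(H, H), hmem, rfl⟩

lemma tview_empty : tview (∅ : BView α) = ∅ := Set.image_empty _

lemma sat_K_iff_epSat {W : BView α} {φ : EForm α} {H T : Set α} :
    sat (.K φ) W H T ↔ epSat W (.K φ) :=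
  ⟨fun h _ _ => h, fun h i hi => h i hi i hi⟩

lemma sat_top {W : BView α} {H T : Set α} : sat EForm.top W H T :=
  ⟨id, id⟩

lemma sat_iff_htSat_reduct {W : BView α} (hW : totalView W) (φ : EForm α) (H T : Set α) :
    sat φ W H T ↔ htSat (reduct W Set.univ φ) H T := by
  induction φ generalizing H T with
  | bot | atom => rfl
  | and φ ψ ihφ ihψ | or φ ψ ihφ ihψ =>
      simp only [reduct, sat, htSat] at *
      rw [ihφ, ihψ]
  | imp φ ψ ihφ ihψ =>
      simp only [reduct, sat, htSat, tview_eq_self_of_total hW, tview_empty] at *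
      rw [ihφ H T, ihψ H T, ihφ T T, ihψ T T]
  | K φ =>
      by_cases h : epSat W (.K φ)
      · simp only [reduct, Set.subset_univ, if_true, h, htSat]
        exact iff_of_true (sat_K_iff_epSat.mpr h) sat_top
      · simp only [reduct, Set.subset_univ, if_true, h, if_false]
        exact iff_of_false (fun hs => h (sat_K_iff_epSat.mp hs)) id

lemma eq_of_biLE_of_total {W W' : BView α} {H H' T T' : Set α} (hW : totalView W)
    (hW' : totalView W') (hle : biLE W' H' T' W H T) : W' = W := by
  obtain ⟨-, hdown, hup⟩ := hle
  ext ⟨H₁, T₁⟩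
  constructor
  · intro hmem
    obtain ⟨H₂, hH₂, -⟩ := hup _ hmem
    obtain rfl : H₁ = T₁ := hW' _ hmem
    obtain rfl : H₂ = H₁ := hW _ hH₂
    exact hH₂
  · intro hmem
    obtain ⟨H₂, hH₂, -⟩ := hdown _ hmem
    obtain rfl : H₁ = T₁ := hW _ hmem
    obtain rfl : H₂ = H₁ := hW' _ hH₂
    exact hH₂

lemma biLT_self_of_ssubset {W : BView α} {H T : Set α} (hHT : H ⊂ T) : biLT W H T W T T :=
  ⟨⟨⟨rfl, hHT.subset⟩, fun i hi => ⟨i.1, hi, subset_rfl⟩, fun i hi => ⟨i.1, hi, subset_rfl⟩⟩,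
    fun h => hHT.ne (congrArg (·.2.1) h)⟩

lemma beliefModel_iff_htSat_reduct {Γ : Set (EForm α)} {W : BView α} (hW : totalView W)
    (hB : isBView W) (hE : ∀ φ ∈ Γ, epSat W φ) {H T : Set α} :
    beliefModel W H T Γ ↔ H ⊆ T ∧ ∀ ψ ∈ reduct W Set.univ '' Γ, htSat ψ H T := by
  simp only [beliefModel, Set.forall_mem_image, ← sat_iff_htSat_reduct hW]
  exact ⟨fun h => ⟨h.2.1, h.2.2.1⟩, fun h => ⟨hB, h.1, h.2, hE⟩⟩

lemma weakEqBeliefModel_iff_stableModel {Γ : Set (EForm α)} {W : BView α} (hW : totalView W)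
    (hB : isBView W) (hE : ∀ φ ∈ Γ, epSat W φ) (T : Set α) :
    weakEqBeliefModel Γ W T ↔ stableModel (reduct W Set.univ '' Γ) T := by
  have hmodel (H : Set α) := beliefModel_iff_htSat_reduct (H := H) (T := T) hW hB hE
  constructor
  · rintro ⟨-, hT, hmin⟩
    refine ⟨((hmodel T).mp hT).2, fun H hHT hH => ?_⟩
    exact hmin W H T hW ((hmodel H).mpr ⟨hHT.subset, hH⟩) (biLT_self_of_ssubset hHT)
  · rintro ⟨hT, hmin⟩
    refine ⟨hW, (hmodel T).mpr ⟨subset_rfl, hT⟩, ?_⟩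
    rintro W' H' T' hW' hH' ⟨hle, hne⟩
    obtain rfl := eq_of_biLE_of_total hW hW' hle
    obtain ⟨⟨rfl, hsub⟩, -⟩ := hle
    refine hmin H' (ssubset_of_subset_of_ne hsub fun h => hne (by rw [h])) ?_
    exact ((hmodel H').mp hH').2

lemma epSat_of_weakAEWorldView {Γ : Set (EForm α)} {W : BView α} (h : weakAEWorldView Γ W) :
    ∀ φ ∈ Γ, epSat W φ := by
  obtain ⟨⟨⟨i, hi⟩, -⟩, -, hfix⟩ := h
  rw [hfix] at hi
  obtain ⟨T, hT, -⟩ := hi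
  exact hT.2.1.2.2.2

lemma epSat_of_G91 {Γ : Set (EForm α)} {W : BView α} (h : G91 Γ W) : ∀ φ ∈ Γ, epSat W φ := by
  obtain ⟨-, hW, hfix⟩ := h
  intro φ hφ i hi
  rw [hfix] at hi
  obtain ⟨T, hT, rfl⟩ := hi
  exact (sat_iff_htSat_reduct hW φ T T).mpr (hT.1 _ ⟨φ, hφ, rfl⟩)

theorem stmt17_general {α : Type} (Γ : Set (EForm α)) (W : BView α) :
    weakAEWorldView Γ W ↔ G91 Γ W := by
  have key : totalView W → isBView W → (∀ φ ∈ Γ, epSat W φ) →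
      ofSets {T | weakEqBeliefModel Γ W T} = ofSets (SMset (reduct W Set.univ '' Γ)) :=
    fun hW hB hE => congrArg ofSets (Set.ext (weakEqBeliefModel_iff_stableModel hW hB hE))
  constructor
  · intro h
    have ⟨hB, hW, hfix⟩ := h
    exact ⟨hB, hW, hfix.trans (key hW hB (epSat_of_weakAEWorldView h))⟩
  · intro h
    have ⟨hB, hW, hfix⟩ := h
    exact ⟨hB, hW, hfix.trans (key hW hB (epSat_of_G91 h)).symm⟩

/-- W is a weak autoepistemic world view of Γ iff W is a G91-world
view of Γ. -/
theorem stmt17 {α : Type} (Γ : Set (EForm α)) (W : BView α) (hW : totalView W) :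
    weakAEWorldView Γ W ↔ G91 Γ W :=
  stmt17_general Γ W

end Epist
end

section
/- Every FAEEL-world view of any theory Γ is also a weak autoepistemic world view of Γ. -/
namespace Epist

attribute [local instance] Classical.propDecidable

variable {α : Type}

end Epist

namespace Epist

variable {α : Type}

lemma tview_tview (W : BView α) : tview (tview W) = tview W := by
  simp [tview, Set.image_image]

lemma totalView_tview (W : BView α) : totalView (tview W) := by
  rintro _ ⟨i, -, rfl⟩
  rfl

lemma isBView.tview {W : BView α} (hW : isBView W) : isBView (tview W) :=
  ⟨hW.1.image _, fun _ ⟨_, _, hi⟩ => hi ▸ subset_rfl⟩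

lemma mem_ofSets {S : Set (Set α)} {T : Set α} : (T, T) ∈ ofSets S ↔ T ∈ S := by
  simp [ofSets]

lemma sat_tview_of_sat (φ : EForm α) {W : BView α} (hW : ∀ i ∈ W, i.1 ⊆ i.2) :
    ∀ {H T : Set α}, H ⊆ T → sat φ W H T → sat φ (tview W) T T := by
  induction φ with
  | bot => exact fun _ h => h
  | atom _ => exact fun hHT h => hHT h
  | and φ ψ ihφ ihψ => exact fun hHT h => ⟨ihφ hHT h.1, ihψ hHT h.2⟩
  | or φ ψ ihφ ihψ => exact fun hHT h => h.imp (ihφ hHT) (ihψ hHT)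
  | imp _ _ _ _ =>
    intro _ _ _ h
    rw [sat, tview_tview]
    exact ⟨h.2, h.2⟩
  | K φ ih =>
    rintro _ _ _ h _ ⟨i, hi, rfl⟩
    exact ih (hW i hi) (h i hi)

lemma beliefModel.tview {Γ : Set (EForm α)} {W : BView α} {H T : Set α}
    (hm : beliefModel W H T Γ) : beliefModel (tview W) T T Γ := by
  obtain ⟨hW, hHT, hsat, hep⟩ := hm
  refine ⟨hW.tview, subset_rfl, fun φ hφ => sat_tview_of_sat φ hW.2 hHT (hsat φ hφ), ?_⟩
  rintro φ hφ _ ⟨i, hi, rfl⟩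
  exact sat_tview_of_sat φ hW.2 (hW.2 i hi) (hep φ hφ i hi)

lemma beliefModel.of_mem {Γ : Set (EForm α)} {W : BView α} {H T : Set α}
    (hm : beliefModel W H T Γ) {i : Set α × Set α} (hi : i ∈ W) :
    beliefModel W i.1 i.2 Γ :=
  ⟨hm.1, hm.1.2 i hi, fun φ hφ => hm.2.2.2 φ hφ i hi, hm.2.2.2⟩

lemma biLE_tview {W : BView α} (hW : ∀ i ∈ W, i.1 ⊆ i.2) {H T : Set α} (hHT : H ⊆ T) :
    biLE W H T (tview W) T T := by
  refine ⟨⟨rfl, hHT⟩, ?_, fun i hi => ⟨i.2, ⟨i, hi, rfl⟩, hW i hi⟩⟩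
  rintro _ ⟨i, hi, rfl⟩
  exact ⟨i.1, hi, hW i hi⟩

lemma biLE.tview_of_totalView {W' W : BView α} {H' T : Set α} (hW : totalView W)
    (hle : biLE W' H' T W T T) : biLE (tview W') T T W T T := by
  obtain ⟨-, hdown, hup⟩ := hle
  refine ⟨⟨rfl, subset_rfl⟩, fun i hi => ?_, ?_⟩
  · obtain ⟨H₁, hH₁, -⟩ := hdown i hi
    exact ⟨i.2, ⟨(H₁, i.2), hH₁, rfl⟩, (hW i hi).ge⟩
  · rintro _ ⟨i, hi, rfl⟩
    obtain ⟨H₁, hH₁, -⟩ := hup i hi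
    exact ⟨H₁, hH₁, (hW _ hH₁).ge⟩

lemma eqBeliefModel.weakEqBeliefModel {Γ : Set (EForm α)} {W : BView α} {T : Set α}
    (h : eqBeliefModel Γ W T) : weakEqBeliefModel Γ W T :=
  ⟨h.1, h.2.1, fun W' H' T' _ => h.2.2 W' H' T'⟩

/-- A smaller belief model ⟨W', H', T⟩ is ruled out in three ways: if `W'` is total, by weak
minimality; if its totalisation differs from `W`, by weak minimality applied to ⟨W'ᵗ, T, T⟩;
otherwise some ⟨H₁, T₁⟩ ∈ W' with H₁ ⊂ T₁ sits strictly below ⟨W, T₁, T₁⟩, contradicting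
that `T₁` is an equilibrium belief model. -/
lemma weakEqBeliefModel.eqBeliefModel {Γ : Set (EForm α)} {W : BView α} {T : Set α}
    (hWeq : ∀ T₁, (T₁, T₁) ∈ W → eqBeliefModel Γ W T₁) (h : weakEqBeliefModel Γ W T) :
    eqBeliefModel Γ W T := by
  obtain ⟨hW, hm, hmin⟩ := h
  refine ⟨hW, hm, ?_⟩
  rintro W' H' T' hm' ⟨hle, hne⟩
  obtain rfl := hle.1.1
  by_cases hW' : totalView W'
  · exact hmin W' H' T' hW' hm' ⟨hle, hne⟩
  by_cases htW' : tview W' = W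
  · obtain ⟨j, hj, hj12⟩ : ∃ j ∈ W', j.1 ≠ j.2 := by
      simpa [totalView] using hW'
    have hlt : biLT W' j.1 j.2 W j.2 j.2 :=
      ⟨htW' ▸ biLE_tview hm'.1.2 (hm'.1.2 j hj), fun h => hj12 (congrArg (·.2.1) h)⟩
    exact (hWeq j.2 (htW' ▸ ⟨j, hj, rfl⟩)).2.2 W' j.1 j.2 (hm'.of_mem hj) hlt
  · exact hmin _ _ _ (totalView_tview W') hm'.tview
      ⟨hle.tview_of_totalView hW, fun h => htW' (congrArg Prod.fst h)⟩

/-- every FAEEL-world view of Γ is a weak autoepistemic world view of Γ. -/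
theorem stmt18 {α : Type} (Γ : Set (EForm α)) (W : BView α) (h : FAEEL Γ W) :
    weakAEWorldView Γ W := by
  obtain ⟨hW, htot, hWeq⟩ := h
  have hmem : ∀ T, (T, T) ∈ W → eqBeliefModel Γ W T := fun T hT =>
    mem_ofSets.1 (hWeq ▸ hT)
  refine ⟨hW, htot, hWeq.trans (congrArg ofSets (Set.ext fun T => ?_))⟩
  exact ⟨eqBeliefModel.weakEqBeliefModel, weakEqBeliefModel.eqBeliefModel hmem⟩

end Epist
end

section
/- Let Γ be a theory, W a FEEL-world view of Γ, and T a set of atoms with ⟨T,T⟩ ∈ W. If ⟨W,T⟩ is a weak equilibrium belief model of Γ, then ⟨W,T⟩ is an equilibrium belief model of Γ. -/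
namespace Epist

attribute [local instance] Classical.propDecidable

variable {α : Type}

end Epist

/-!
The view of a belief model is an epistemic model, and ⪯ on belief interpretations restricts to
⪯ on their views. So a belief model strictly below ⟨W,T⟩ has a view below W, which the
minimality of the FEEL-world view W forces to be W itself. That belief model is then
belief-total, and the weak equilibrium condition already rules it out.
-/

namespace Epist

variable {α : Type}

theorem beliefModel.epModel {W : BView α} {H T : Set α} {Γ : Set (EForm α)}
    (h : beliefModel W H T Γ) : epModel W Γ :=
  ⟨h.1, h.2.2.2⟩

theorem biLE.viewLE {W' W : BView α} {H' T' H T : Set α} (h : biLE W' H' T' W H T) :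
    viewLE W' W :=
  h.2

theorem FEEL.eq_of_beliefModel_of_biLE {Γ : Set (EForm α)} {W W' : BView α}
    {H' T' H T : Set α} (hF : FEEL Γ W) (hbm : beliefModel W' H' T' Γ)
    (hle : biLE W' H' T' W H T) : W' = W := by
  by_contra hne
  exact hF.2.2 W' hbm.epModel ⟨hle.viewLE, hne⟩

theorem stmt19_general {α : Type} (Γ : Set (EForm α)) (W : BView α) (T : Set α)
    (hF : FEEL Γ W) (hweak : weakEqBeliefModel Γ W T) :
    eqBeliefModel Γ W T := by
  obtain ⟨htot, hbm, hmin⟩ := hweak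
  refine ⟨htot, hbm, fun W' H' T' hbm' hlt => ?_⟩
  obtain rfl : W' = W := hF.eq_of_beliefModel_of_biLE hbm' hlt.1
  exact hmin W' H' T' htot hbm' hlt

/-- if W is a FEEL-world view of Γ, T ∈ W and ⟨W,T⟩ is a weak
equilibrium belief model of Γ, then ⟨W,T⟩ is an equilibrium belief model of Γ. -/
theorem stmt19 {α : Type} (Γ : Set (EForm α)) (W : BView α) (T : Set α)
    (hF : FEEL Γ W) (hmem : (T, T) ∈ W) (hweak : weakEqBeliefModel Γ W T) :
    eqBeliefModel Γ W T :=
  stmt19_general Γ W T hF hweak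

end Epist
end
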